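/- Let G be the group with generators a₁, b₁, a₂, b₂ and, writing r = b₁⁻¹a₂b₂, with defining relators [a₁,b₁][a₂,b₂], a₁r², a₁b₁⁻²ra₂, a₁b₁⁻⁴ra₂r⁻¹a₂, a₁b₁a₁⁻¹a₂b₂a₂⁻¹, a₁b₁a₁⁻¹b₂⁻¹a₂⁻¹r, [r, a₂⁻¹], together with the additional relators b₁ and a₁ (where [x,y] = xyx⁻¹y⁻¹). Then G is a cyclic group of order 2, generated by the image of a₂. -/
import Mathlib

namespace FibrationX3

/-- Generators `a₁, b₁, a₂, b₂` of the free group on four letters. -/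
def a₁ : FreeGroup (Fin 4) := FreeGroup.of 0
def b₁ : FreeGroup (Fin 4) := FreeGroup.of 1
def a₂ : FreeGroup (Fin 4) := FreeGroup.of 2
def b₂ : FreeGroup (Fin 4) := FreeGroup.of 3

/-- `r = b₁⁻¹ a₂ b₂`. -/
def r : FreeGroup (Fin 4) := b₁⁻¹ * a₂ * b₂

/-- The relators induced by the vanishing cycles of the genus-2 Lefschetz
fibration `(X₃, f₃)` of type `(16,2)`, together with the surface relator;
the curves `c₁` and `c₂` induce the extra relators `b₁` and `a₁`. -/
def rels : Set (FreeGroup (Fin 4)) :=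
  { (a₁ * b₁ * a₁⁻¹ * b₁⁻¹) * (a₂ * b₂ * a₂⁻¹ * b₂⁻¹),
    a₁ * r ^ 2,
    a₁ * b₁⁻¹ * b₁⁻¹ * r * a₂,
    a₁ * b₁⁻¹ * b₁⁻¹ * b₁⁻¹ * b₁⁻¹ * r * a₂ * r⁻¹ * a₂,
    a₁ * b₁ * a₁⁻¹ * a₂ * b₂ * a₂⁻¹,
    a₁ * b₁ * a₁⁻¹ * b₂⁻¹ * a₂⁻¹ * r,
    r * a₂⁻¹ * r⁻¹ * a₂,
    b₁,
    a₁ }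

/-- The quotient map. -/
def mkh : FreeGroup (Fin 4) →* PresentedGroup rels :=
  QuotientGroup.mk' (Subgroup.normalClosure rels)

lemma relmk {x : FreeGroup (Fin 4)} (hx : x ∈ rels) : mkh x = 1 :=
  (QuotientGroup.eq_one_iff _).mpr (Subgroup.subset_normalClosure hx)

lemma mkh_of (i : Fin 4) : mkh (FreeGroup.of i) = PresentedGroup.of i := rfl

lemma of0_eq_one : (PresentedGroup.of 0 : PresentedGroup rels) = 1 := by
  have := relmk (show a₁ ∈ rels by simp [rels])
  simpa [a₁, mkh_of] using this

lemma of1_eq_one : (PresentedGroup.of 1 : PresentedGroup rels) = 1 := by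
  have := relmk (show b₁ ∈ rels by simp [rels])
  simpa [b₁, mkh_of] using this

lemma key : (PresentedGroup.of 2 : PresentedGroup rels) *
    (PresentedGroup.of 3 : PresentedGroup rels) * PresentedGroup.of 2 = 1 := by
  have := relmk (show a₁ * b₁⁻¹ * b₁⁻¹ * r * a₂ ∈ rels by simp [rels])
  simpa [a₁, b₁, a₂, b₂, r, mkh_of, of0_eq_one, of1_eq_one, map_mul, map_inv] using this

lemma key2 : ((PresentedGroup.of 2 : PresentedGroup rels) *
    PresentedGroup.of 3) ^ 2 = 1 := by
  have := relmk (show a₁ * r ^ 2 ∈ rels by simp [rels])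
  simpa [a₁, b₁, a₂, b₂, r, mkh_of, of0_eq_one, of1_eq_one, map_mul, map_inv,
    map_pow] using this

lemma of3_eq : (PresentedGroup.of 3 : PresentedGroup rels) =
    (PresentedGroup.of 2)⁻¹ * (PresentedGroup.of 2)⁻¹ := by
  have h := key
  rw [mul_eq_one_iff_eq_inv] at h
  conv_lhs => rw [show (PresentedGroup.of 3 : PresentedGroup rels) =
    (PresentedGroup.of 2)⁻¹ * (PresentedGroup.of 2 * PresentedGroup.of 3) by group, h]

lemma sq_eq_one : (PresentedGroup.of 2 : PresentedGroup rels) ^ 2 = 1 := by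
  have h := key2
  rw [of3_eq] at h
  simp only [mul_inv_cancel_left] at h
  rwa [inv_pow, inv_eq_one] at h

lemma of3_eq_one : (PresentedGroup.of 3 : PresentedGroup rels) = 1 := by
  rw [of3_eq, ← mul_inv_rev, ← pow_two, sq_eq_one, inv_one]

lemma gen_top : Subgroup.closure
    ({PresentedGroup.of 2} : Set (PresentedGroup rels)) = ⊤ := by
  rw [eq_top_iff, ← PresentedGroup.closure_range_of rels, Subgroup.closure_le]
  rintro x ⟨i, rfl⟩
  fin_cases i
  · show (PresentedGroup.of 0 : PresentedGroup rels) ∈ _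
    rw [of0_eq_one]; simpa using Subgroup.one_mem _
  · show (PresentedGroup.of 1 : PresentedGroup rels) ∈ _
    rw [of1_eq_one]; simpa using Subgroup.one_mem _
  · exact Subgroup.subset_closure rfl
  · show (PresentedGroup.of 3 : PresentedGroup rels) ∈ _
    rw [of3_eq_one]; simpa using Subgroup.one_mem _

/-- The map to `ZMod 2`. -/
def f : Fin 4 → Multiplicative (ZMod 2) := ![1, 1, Multiplicative.ofAdd 1, 1]

lemma f_rels : ∀ x ∈ rels, FreeGroup.lift f x = 1 := by
  intro x hx
  simp only [rels, Set.mem_insert_iff, Set.mem_singleton_iff] at hx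
  rcases hx with h|h|h|h|h|h|h|h|h <;> subst h <;>
    simp [a₁, b₁, a₂, b₂, r, f, map_mul, map_inv, map_pow] <;> decide

/-- The homomorphism to `ZMod 2`. -/
def φ : PresentedGroup rels →* Multiplicative (ZMod 2) :=
  PresentedGroup.toGroup f_rels

lemma φ_of2 : φ (PresentedGroup.of 2) = Multiplicative.ofAdd 1 := by
  rw [φ, PresentedGroup.toGroup.of]; rfl

lemma elem_cases (x : PresentedGroup rels) :
    x = 1 ∨ x = PresentedGroup.of 2 := by
  have hx : x ∈ Subgroup.zpowers (PresentedGroup.of 2 : PresentedGroup rels) := by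
    rw [Subgroup.zpowers_eq_closure, gen_top]; trivial
  rw [Subgroup.mem_zpowers_iff] at hx
  obtain ⟨n, rfl⟩ := hx
  rcases Int.even_or_odd n with ⟨k, hk⟩ | ⟨k, hk⟩
  · left
    rw [hk, show k + k = 2 * k by ring, zpow_mul]
    norm_cast
    rw [sq_eq_one, one_zpow]
  · right
    rw [hk, zpow_add, zpow_mul, zpow_one]
    norm_cast
    rw [sq_eq_one, one_zpow, one_mul]

lemma φ_bij : Function.Bijective φ := by
  constructor
  · intro x y hxy
    rcases elem_cases x with hx | hx <;> rcases elem_cases y with hy | hy <;>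
      subst hx <;> subst hy <;> first
        | rfl
        | (exfalso; rw [map_one, φ_of2] at hxy; revert hxy; decide)
  · intro z
    have : z = 1 ∨ z = Multiplicative.ofAdd 1 := by revert z; decide
    rcases this with h | h
    · exact ⟨1, by simp [h]⟩
    · exact ⟨PresentedGroup.of 2, by rw [φ_of2, h]⟩

/-- The group `G = π₁(X₃)` is cyclic of order 2, generated by the image of `a₂`. -/
theorem pi1_X3 :
    Nonempty (PresentedGroup rels ≃* Multiplicative (ZMod 2)) ∧
      Subgroup.closure
        ({PresentedGroup.of 2} : Set (PresentedGroup rels)) = ⊤ := by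
  exact ⟨⟨MulEquiv.ofBijective φ φ_bij⟩, gen_top⟩

end FibrationX3
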